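/- arXiv:2111.11817 — 8 statements merged into one kernel-verified Lean document; each statement's English description precedes it below -/
import Mathlib

section
/- Let G be a finite simple graph and let v be a vertex of G with deg(v) ≥ 1. Then γ_coe(G ⊙ v) ≤ γ_coe(G) + deg(v) − 1. -/
open scoped Classical

/-- `D` is a dominating set of `G`. -/
def IsDomSet {V : Type*} (G : SimpleGraph V) (D : Finset V) : Prop :=
  ∀ v ∉ D, ∃ u ∈ D, G.Adj u v

/-- `D` is a co-even dominating set of `G`. -/
def IsCoevenDomSet {V : Type*} [Fintype V] (G : SimpleGraph V) (D : Finset V) : Prop :=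
  IsDomSet G D ∧ ∀ v ∉ D, Even (G.degree v)

/-- The domination number of `G`. -/
noncomputable def domNum {V : Type*} [Fintype V] (G : SimpleGraph V) : ℕ :=
  sInf {n | ∃ D : Finset V, IsDomSet G D ∧ D.card = n}

/-- The co-even domination number of `G`. -/
noncomputable def coevenDomNum {V : Type*} [Fintype V] (G : SimpleGraph V) : ℕ :=
  sInf {n | ∃ D : Finset V, IsCoevenDomSet G D ∧ D.card = n}

/-- The graph obtained from G by removing every edge joining two neighbours of v. -/
def odot {V : Type*} (G : SimpleGraph V) (v : V) : SimpleGraph V where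
  Adj x y := G.Adj x y ∧ ¬(G.Adj v x ∧ G.Adj v y)
  symm := ⟨fun a b h => ⟨h.1.symm, fun hc => h.2 ⟨hc.2, hc.1⟩⟩⟩
  loopless := ⟨fun a h => G.loopless.irrefl a h.1⟩

lemma odot_degree_eq {V : Type*} [Fintype V] (G : SimpleGraph V) (v x : V)
    (hx : ¬ G.Adj v x) : (odot G v).degree x = G.degree x := by
  unfold SimpleGraph.degree
  congr 1
  ext y
  simp only [SimpleGraph.mem_neighborFinset]
  simp only [odot]
  tauto

/-- Auxiliary graph: edges of `G` joining two neighbours of `v`. -/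
def auxH {V : Type*} (G : SimpleGraph V) (v : V) : SimpleGraph V where
  Adj x y := G.Adj x y ∧ G.Adj v x ∧ G.Adj v y
  symm := ⟨fun a b h => ⟨h.1.symm, h.2.2, h.2.1⟩⟩
  loopless := ⟨fun a h => G.loopless.irrefl a h.1⟩

lemma odot_nbr_eq_sdiff {V : Type*} [Fintype V] (G : SimpleGraph V) (v w : V)
    (hw : G.Adj v w) :
    (odot G v).neighborFinset w = G.neighborFinset w \ (auxH G v).neighborFinset w := by
  ext y
  simp only [SimpleGraph.mem_neighborFinset, Finset.mem_sdiff]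
  simp only [odot, auxH]
  tauto

lemma odot_degree_of_nbr {V : Type*} [Fintype V] (G : SimpleGraph V) (v w : V)
    (hw : G.Adj v w) :
    (odot G v).degree w = G.degree w - (auxH G v).degree w := by
  unfold SimpleGraph.degree
  rw [odot_nbr_eq_sdiff G v w hw, Finset.card_sdiff_of_subset]
  intro y hy
  simp only [SimpleGraph.mem_neighborFinset] at hy ⊢
  simp only [auxH] at hy ⊢
  exact hy.1

lemma exists_even_auxH_degree {V : Type*} [Fintype V] (G : SimpleGraph V) (v : V)
    (hodd : Odd (G.degree v)) :
    ∃ w ∈ G.neighborFinset v, Even ((auxH G v).degree w) := by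
  by_contra h
  push_neg at h
  have hsum : Even (∑ x, (auxH G v).degree x) := by
    rw [SimpleGraph.sum_degrees_eq_twice_card_edges]
    exact even_two_mul _
  have hzero : ∀ x ∈ Finset.univ, x ∉ G.neighborFinset v → (auxH G v).degree x = 0 := by
    intro x _ hx
    simp only [SimpleGraph.mem_neighborFinset] at hx
    rw [SimpleGraph.degree, Finset.card_eq_zero]
    ext y
    simp only [SimpleGraph.mem_neighborFinset, Finset.notMem_empty, iff_false]
    simp only [auxH]
    tauto
  rw [← Finset.sum_subset (Finset.subset_univ (G.neighborFinset v)) hzero] at hsum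
  rw [Finset.even_sum_iff_even_card_odd] at hsum
  have : (G.neighborFinset v).filter (fun x => Odd ((auxH G v).degree x))
      = G.neighborFinset v := by
    apply Finset.filter_true_of_mem
    intro x hx
    exact Nat.not_even_iff_odd.mp (h x hx)
  rw [this] at hsum
  rw [SimpleGraph.card_neighborFinset_eq_degree] at hsum
  exact (Nat.not_even_iff_odd.mpr hodd) hsum

theorem stmt_3 {V : Type*} [Fintype V] (G : SimpleGraph V) (v : V)
    (hv : 1 ≤ G.degree v) :
    coevenDomNum (odot G v) ≤ coevenDomNum G + G.degree v - 1 := by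
  -- obtain a minimum co-even dominating set D of G
  have hne : coevenDomNum G ∈ {n | ∃ D : Finset V, IsCoevenDomSet G D ∧ D.card = n} := by
    apply Nat.sInf_mem
    exact ⟨Fintype.card V, Finset.univ, ⟨fun x hx => absurd (Finset.mem_univ x) hx,
      fun x hx => absurd (Finset.mem_univ x) hx⟩, Finset.card_univ⟩
  obtain ⟨D, ⟨hdom, heven⟩, hcard⟩ := hne
  set N := G.neighborFinset v with hN
  have hNcard : N.card = G.degree v := G.card_neighborFinset_eq_degree v
  -- it suffices to exhibit a suitable co-even dominating set of odot G v
  have key : ∀ D' : Finset V, IsCoevenDomSet (odot G v) D' →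
      D'.card ≤ coevenDomNum G + G.degree v - 1 →
      coevenDomNum (odot G v) ≤ coevenDomNum G + G.degree v - 1 := by
    intro D' h1 h2
    exact le_trans (Nat.sInf_le ⟨D', h1, rfl⟩) h2
  by_cases hcase : ∃ u ∈ D, G.Adj v u
  · -- Case 1: D' = D ∪ (N.erase u)
    obtain ⟨u, huD, huN⟩ := hcase
    apply key (D ∪ N.erase u)
    · constructor
      · intro x hx
        simp only [Finset.mem_union, not_or] at hx
        have hxN : ¬ G.Adj v x := by
          intro hadj
          rcases eq_or_ne x u with rfl | hne
          · exact hx.1 huD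
          · exact hx.2 (Finset.mem_erase.mpr ⟨hne, (SimpleGraph.mem_neighborFinset _ _ _).mpr hadj⟩)
        obtain ⟨w, hwD, hwx⟩ := hdom x hx.1
        exact ⟨w, Finset.mem_union_left _ hwD, ⟨hwx, fun hc => hxN hc.2⟩⟩
      · intro x hx
        simp only [Finset.mem_union, not_or] at hx
        have hxN : ¬ G.Adj v x := by
          intro hadj
          rcases eq_or_ne x u with rfl | hne
          · exact hx.1 huD
          · exact hx.2 (Finset.mem_erase.mpr ⟨hne, (SimpleGraph.mem_neighborFinset _ _ _).mpr hadj⟩)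
        rw [odot_degree_eq G v x hxN]
        exact heven x hx.1
    · calc (D ∪ N.erase u).card ≤ D.card + (N.erase u).card := Finset.card_union_le _ _
        _ = D.card + (N.card - 1) := by
            rw [Finset.card_erase_of_mem ((SimpleGraph.mem_neighborFinset _ _ _).mpr huN)]
        _ ≤ coevenDomNum G + G.degree v - 1 := by
            rw [hcard, hNcard]
            have : 1 ≤ N.card := Finset.card_pos.mpr ⟨u, (SimpleGraph.mem_neighborFinset _ _ _).mpr huN⟩
            omega
  · -- No member of D is a neighbour of v; hence v ∈ D
    push_neg at hcase
    have hvD : v ∈ D := by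
      by_contra hvD
      obtain ⟨u, huD, hu⟩ := hdom v hvD
      exact hcase u huD hu.symm
    by_cases hpar : Even (G.degree v)
    · -- Case 2: D' = (D.erase v) ∪ N
      apply key (D.erase v ∪ N)
      · constructor
        · intro x hx
          simp only [Finset.mem_union, not_or, Finset.mem_erase] at hx
          have hxN : ¬ G.Adj v x := fun h => hx.2 ((SimpleGraph.mem_neighborFinset _ _ _).mpr h)
          by_cases heq : x = v
          · rw [heq]
            obtain ⟨w, hw⟩ := Finset.card_pos.mp (hNcard ▸ hv)
            have hadj : G.Adj v w := (SimpleGraph.mem_neighborFinset _ _ _).mp hw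
            exact ⟨w, Finset.mem_union_right _ hw,
              ⟨hadj.symm, fun hc => G.loopless.irrefl v hc.2⟩⟩
          · have hxD : x ∉ D := fun h => hx.1 ⟨heq, h⟩
            obtain ⟨w, hwD, hwx⟩ := hdom x hxD
            have hwv : w ≠ v := by
              rintro rfl
              exact hxN hwx
            exact ⟨w, Finset.mem_union_left _ (Finset.mem_erase.mpr ⟨hwv, hwD⟩),
              ⟨hwx, fun hc => hxN hc.2⟩⟩
        · intro x hx
          simp only [Finset.mem_union, not_or, Finset.mem_erase] at hx
          have hxN : ¬ G.Adj v x := fun h => hx.2 ((SimpleGraph.mem_neighborFinset _ _ _).mpr h)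
          rw [odot_degree_eq G v x hxN]
          by_cases heq : x = v
          · rw [heq]; exact hpar
          · exact heven x (fun h => hx.1 ⟨heq, h⟩)
      · calc (D.erase v ∪ N).card ≤ (D.erase v).card + N.card := Finset.card_union_le _ _
          _ = (D.card - 1) + N.card := by rw [Finset.card_erase_of_mem hvD]
          _ ≤ coevenDomNum G + G.degree v - 1 := by
              rw [hcard, hNcard]
              have : 1 ≤ D.card := Finset.card_pos.mpr ⟨v, hvD⟩
              omega
    · -- Case 3: degree of v is odd; find w in N with even auxH-degree
      obtain ⟨w, hwN, hwEven⟩ := exists_even_auxH_degree G v (Nat.not_even_iff_odd.mp hpar)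
      have hwadj : G.Adj v w := (SimpleGraph.mem_neighborFinset _ _ _).mp hwN
      have hwD : w ∉ D := fun h => hcase w h hwadj
      apply key ((D ∪ N).erase w)
      · constructor
        · intro x hx
          simp only [Finset.mem_erase, not_and, Finset.mem_union, not_or] at hx
          by_cases heq : x = w
          · rw [heq]
            refine ⟨v, ?_, ⟨hwadj, fun hc => G.loopless.irrefl v hc.1⟩⟩
            exact Finset.mem_erase.mpr ⟨fun h => G.loopless.irrefl v (h ▸ hwadj),
              Finset.mem_union_left _ hvD⟩
          · have := hx heq
            have hxD : x ∉ D := this.1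
            have hxN : ¬ G.Adj v x := fun h =>
              this.2 ((SimpleGraph.mem_neighborFinset _ _ _).mpr h)
            obtain ⟨u, huD, hux⟩ := hdom x hxD
            have huw : u ≠ w := fun h => hwD (h ▸ huD)
            exact ⟨u, Finset.mem_erase.mpr ⟨huw, Finset.mem_union_left _ huD⟩,
              ⟨hux, fun hc => hxN hc.2⟩⟩
        · intro x hx
          simp only [Finset.mem_erase, not_and, Finset.mem_union, not_or] at hx
          by_cases heq : x = w
          · rw [heq, odot_degree_of_nbr G v w hwadj]
            have hle : (auxH G v).degree w ≤ G.degree w := by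
              apply Finset.card_le_card
              intro y hy
              simp only [SimpleGraph.mem_neighborFinset] at hy ⊢
              simp only [auxH] at hy ⊢
              exact hy.1
            rw [Nat.even_sub hle]
            simp [heven w hwD, hwEven]
          · have := hx heq
            have hxN : ¬ G.Adj v x := fun h =>
              this.2 ((SimpleGraph.mem_neighborFinset _ _ _).mpr h)
            rw [odot_degree_eq G v x hxN]
            exact heven x this.1
      · have hwmem : w ∈ D ∪ N := Finset.mem_union_right _ hwN
        calc ((D ∪ N).erase w).card = (D ∪ N).card - 1 := Finset.card_erase_of_mem hwmem
          _ ≤ D.card + N.card - 1 := by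
              have := Finset.card_union_le D N
              omega
          _ = coevenDomNum G + G.degree v - 1 := by rw [hcard, hNcard]
end

section
/- Let G be a finite simple graph and let v be a vertex of G with deg(v) ≥ 1. Then γ_coe(G) − deg(v) + 1 ≤ γ_coe(G ⊙ v). -/
open scoped Classical

lemma odot_neighborFinset_of_not_adj {V : Type*} [Fintype V] (G : SimpleGraph V) (v w : V)
    (h : ¬ G.Adj v w) :
    (odot G v).neighborFinset w = G.neighborFinset w := by
  ext y
  simp only [SimpleGraph.mem_neighborFinset]
  constructor
  · exact fun hy => hy.1
  · exact fun hy => ⟨hy, fun hc => h hc.1⟩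

lemma odot_degree_of_not_adj {V : Type*} [Fintype V] (G : SimpleGraph V) (v w : V)
    (h : ¬ G.Adj v w) :
    (odot G v).degree w = G.degree w := by
  unfold SimpleGraph.degree
  rw [odot_neighborFinset_of_not_adj G v w h]

lemma odot_neighborFinset_of_adj {V : Type*} [Fintype V] (G : SimpleGraph V) (v w : V)
    (h : G.Adj v w) :
    (odot G v).neighborFinset w = G.neighborFinset w \ G.neighborFinset v := by
  ext y
  simp only [SimpleGraph.mem_neighborFinset, Finset.mem_sdiff]
  constructor
  · exact fun hy => ⟨hy.1, fun hc => hy.2 ⟨h, hc⟩⟩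
  · exact fun hy => ⟨hy.1, fun hc => hy.2 hc.2⟩

/-- The auxiliary graph whose edges are the edges of `G` joining two neighbours of `v`. -/
def auxGraph {V : Type*} (G : SimpleGraph V) (v : V) : SimpleGraph V where
  Adj x y := G.Adj v x ∧ G.Adj v y ∧ G.Adj x y
  symm := ⟨fun a b h => ⟨h.2.1, h.1, h.2.2.symm⟩⟩
  loopless := ⟨fun a h => G.loopless.irrefl a h.2.2⟩

lemma auxGraph_neighborFinset_of_adj {V : Type*} [Fintype V] (G : SimpleGraph V) (v w : V)
    (h : G.Adj v w) :
    (auxGraph G v).neighborFinset w = G.neighborFinset w ∩ G.neighborFinset v := by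
  ext y
  simp only [SimpleGraph.mem_neighborFinset, Finset.mem_inter]
  constructor
  · exact fun hy => ⟨hy.2.2, hy.2.1⟩
  · exact fun hy => ⟨h, hy.2, hy.1⟩

lemma auxGraph_degree_of_not_adj {V : Type*} [Fintype V] (G : SimpleGraph V) (v w : V)
    (h : ¬ G.Adj v w) :
    (auxGraph G v).degree w = 0 := by
  rw [SimpleGraph.degree, Finset.card_eq_zero, Finset.eq_empty_iff_forall_notMem]
  intro y hy
  rw [SimpleGraph.mem_neighborFinset] at hy
  exact h hy.1

lemma key_lemma {V : Type*} [Fintype V] (G : SimpleGraph V) (v : V)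
    (hv : 1 ≤ G.degree v) (D' : Finset V) (hD' : IsCoevenDomSet (odot G v) D') :
    ∃ D : Finset V, IsCoevenDomSet G D ∧ D.card + 1 ≤ D'.card + G.degree v := by
  obtain ⟨hdom, heven⟩ := hD'
  have hNcard : (G.neighborFinset v).card = G.degree v := rfl
  by_cases ha : ∃ u ∈ D', G.Adj v u
  · -- Case a: D' meets N(v); take D = D' ∪ N(v)
    obtain ⟨u, huD, huv⟩ := ha
    refine ⟨D' ∪ G.neighborFinset v, ⟨?_, ?_⟩, ?_⟩
    · intro w hw
      rw [Finset.mem_union, not_or] at hw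
      obtain ⟨u', hu'D, hu'⟩ := hdom w hw.1
      exact ⟨u', Finset.mem_union_left _ hu'D, hu'.1⟩
    · intro w hw
      rw [Finset.mem_union, not_or, SimpleGraph.mem_neighborFinset] at hw
      rw [← odot_degree_of_not_adj G v w hw.2]
      exact heven w hw.1
    · have heq : D' ∪ G.neighborFinset v = D' ∪ (G.neighborFinset v).erase u := by
        ext x
        simp only [Finset.mem_union, Finset.mem_erase]
        constructor
        · rintro (h | h)
          · exact Or.inl h
          · by_cases hx : x = u
            · exact Or.inl (hx ▸ huD)
            · exact Or.inr ⟨hx, h⟩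
        · rintro (h | h)
          · exact Or.inl h
          · exact Or.inr h.2
      rw [heq]
      have h1 := Finset.card_union_le D' ((G.neighborFinset v).erase u)
      have h2 : ((G.neighborFinset v).erase u).card = (G.neighborFinset v).card - 1 :=
        Finset.card_erase_of_mem (by rwa [SimpleGraph.mem_neighborFinset])
      omega
  · -- v ∈ D'
    push_neg at ha
    have hvD : v ∈ D' := by
      by_contra hvD
      obtain ⟨u, huD, hu⟩ := hdom v hvD
      exact ha u huD hu.1.symm
    by_cases hev : Even (G.degree v)
    · -- Case: deg v even; take D = (D'.erase v) ∪ N(v)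
      refine ⟨D'.erase v ∪ G.neighborFinset v, ⟨?_, ?_⟩, ?_⟩
      · intro w hw
        rw [Finset.mem_union, not_or, Finset.mem_erase, SimpleGraph.mem_neighborFinset] at hw
        by_cases hwv : w = v
        · subst hwv
          obtain ⟨u, hu⟩ := Finset.card_pos.mp (hNcard ▸ hv)
          rw [SimpleGraph.mem_neighborFinset] at hu
          exact ⟨u, Finset.mem_union_right _ (by rwa [SimpleGraph.mem_neighborFinset]), hu.symm⟩
        · have hwD' : w ∉ D' := fun h => hw.1 ⟨hwv, h⟩
          obtain ⟨u, huD, hu⟩ := hdom w hwD'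
          have huv : u ≠ v := by
            rintro rfl
            exact hw.2 hu.1
          exact ⟨u, Finset.mem_union_left _ (Finset.mem_erase.mpr ⟨huv, huD⟩), hu.1⟩
      · intro w hw
        rw [Finset.mem_union, not_or, Finset.mem_erase, SimpleGraph.mem_neighborFinset] at hw
        by_cases hwv : w = v
        · exact hwv ▸ hev
        · have hwD' : w ∉ D' := fun h => hw.1 ⟨hwv, h⟩
          rw [← odot_degree_of_not_adj G v w hw.2]
          exact heven w hwD'
      · have h1 := Finset.card_union_le (D'.erase v) (G.neighborFinset v)
        have h2 : (D'.erase v).card = D'.card - 1 := Finset.card_erase_of_mem hvD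
        have h3 : 1 ≤ D'.card := Finset.card_pos.mpr ⟨v, hvD⟩
        omega
    · by_cases hb : ∃ u, G.Adj v u ∧ Even (G.degree u)
      · -- Case b: take D = D' ∪ (N(v).erase u)
        obtain ⟨u, huv, hue⟩ := hb
        refine ⟨D' ∪ (G.neighborFinset v).erase u, ⟨?_, ?_⟩, ?_⟩
        · intro w hw
          rw [Finset.mem_union, not_or, Finset.mem_erase, SimpleGraph.mem_neighborFinset] at hw
          by_cases hwu : w = u
          · exact ⟨v, Finset.mem_union_left _ hvD, hwu ▸ huv⟩
          · have hwv : ¬ G.Adj v w := fun h => hw.2 ⟨hwu, h⟩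
            obtain ⟨u', hu'D, hu'⟩ := hdom w hw.1
            exact ⟨u', Finset.mem_union_left _ hu'D, hu'.1⟩
        · intro w hw
          rw [Finset.mem_union, not_or, Finset.mem_erase, SimpleGraph.mem_neighborFinset] at hw
          by_cases hwu : w = u
          · exact hwu ▸ hue
          · have hwv : ¬ G.Adj v w := fun h => hw.2 ⟨hwu, h⟩
            rw [← odot_degree_of_not_adj G v w hwv]
            exact heven w hw.1
        · have h1 := Finset.card_union_le D' ((G.neighborFinset v).erase u)
          have h2 : ((G.neighborFinset v).erase u).card = (G.neighborFinset v).card - 1 :=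
            Finset.card_erase_of_mem (by rwa [SimpleGraph.mem_neighborFinset])
          omega
      · -- Case c: contradiction via parity
        exfalso
        push_neg at hb
        -- every neighbour u of v : u ∉ D', deg_G u odd, so |N(u) ∩ N(v)| odd
        have hodd : ∀ u ∈ G.neighborFinset v, Odd ((auxGraph G v).degree u) := by
          intro u hu
          rw [SimpleGraph.mem_neighborFinset] at hu
          have huD : u ∉ D' := fun h => ha u h hu
          have h1 : Even ((odot G v).degree u) := heven u huD
          have h2 : Odd (G.degree u) := Nat.not_even_iff_odd.mp (hb u hu)
          have hdeg : (odot G v).degree u = (G.neighborFinset u \ G.neighborFinset v).card := by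
            rw [SimpleGraph.degree, odot_neighborFinset_of_adj G v u hu]
          have hadeg : (auxGraph G v).degree u
              = (G.neighborFinset u ∩ G.neighborFinset v).card := by
            rw [SimpleGraph.degree, auxGraph_neighborFinset_of_adj G v u hu]
          have hsum := Finset.card_sdiff_add_card_inter (G.neighborFinset u) (G.neighborFinset v)
          have hGdeg : (G.neighborFinset u).card = G.degree u := rfl
          rw [Nat.odd_iff] at h2 ⊢
          rw [Nat.even_iff] at h1
          omega
        have hhand : Even (∑ u, (auxGraph G v).degree u) :=
          ⟨(auxGraph G v).edgeFinset.card, by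
            rw [SimpleGraph.sum_degrees_eq_twice_card_edges]; ring⟩
        have hsub : ∑ u ∈ G.neighborFinset v, (auxGraph G v).degree u
            = ∑ u, (auxGraph G v).degree u := by
          apply Finset.sum_subset (Finset.subset_univ _)
          intro x _ hx
          rw [SimpleGraph.mem_neighborFinset] at hx
          exact auxGraph_degree_of_not_adj G v x hx
        have hmod : (∑ u ∈ G.neighborFinset v, (auxGraph G v).degree u) % 2
            = (G.neighborFinset v).card % 2 := by
          rw [Finset.sum_nat_mod]
          have : ∀ u ∈ G.neighborFinset v, (auxGraph G v).degree u % 2 = 1 := by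
            intro u hu
            exact Nat.odd_iff.mp (hodd u hu)
          rw [Finset.sum_congr rfl this, Finset.sum_const, smul_eq_mul, mul_one]
        rw [← hsub] at hhand
        rw [Nat.even_iff] at hhand
        rw [hmod] at hhand
        rw [hNcard] at hhand
        exact hev (Nat.even_iff.mpr hhand)

theorem stmt_4 {V : Type*} [Fintype V] (G : SimpleGraph V) (v : V)
    (hv : 1 ≤ G.degree v) :
    (coevenDomNum G : ℤ) - G.degree v + 1 ≤ (coevenDomNum (odot G v) : ℤ) := by
  have hne : ∃ n, n ∈ {n | ∃ D : Finset V, IsCoevenDomSet (odot G v) D ∧ D.card = n} :=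
    ⟨(Finset.univ : Finset V).card, Finset.univ,
      ⟨fun w hw => absurd (Finset.mem_univ w) hw,
       fun w hw => absurd (Finset.mem_univ w) hw⟩, rfl⟩
  obtain ⟨D', hD', hcard⟩ := Nat.sInf_mem hne
  obtain ⟨D, hD, hle⟩ := key_lemma G v hv D' hD'
  have h1 : coevenDomNum G ≤ D.card := Nat.sInf_le ⟨D, hD, rfl⟩
  have h2 : coevenDomNum (odot G v) = D'.card := hcard.symm
  omega
end

section
/- For every finite simple graph G, the co-even domination number of the 2-subdivision of G is at most the number of vertices of G: γ_coe(G^{1/2}) ≤ |V(G)|. -/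
open scoped Classical

/-- Base relation for the k-subdivision of G: each edge e of G, with endpoints
a < b (in the linear order on V), is replaced by the path
a, (e,0), (e,1), ..., (e,k-2), b of length k. -/
def subdivRel {V : Type*} [LinearOrder V] (G : SimpleGraph V) (k : ℕ) :
    (V ⊕ (G.edgeSet × Fin (k - 1))) → (V ⊕ (G.edgeSet × Fin (k - 1))) → Prop
  | Sum.inl a, Sum.inl b => k = 1 ∧ G.Adj a b
  | Sum.inl a, Sum.inr (e, i) =>
      a ∈ (e : Sym2 V) ∧
        ((i.val = 0 ∧ ∀ b ∈ (e : Sym2 V), a ≤ b) ∨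
          (i.val = k - 2 ∧ ∀ b ∈ (e : Sym2 V), b ≤ a))
  | Sum.inr _, Sum.inl _ => False
  | Sum.inr (e, i), Sum.inr (f, j) => e = f ∧ j.val = i.val + 1

/-- The k-subdivision of G: every edge of G is replaced by a path of length k
through k - 1 new internal vertices, the internal vertices of distinct edges
being pairwise disjoint. -/
def kSubdivision {V : Type*} [LinearOrder V] (G : SimpleGraph V) (k : ℕ) :
    SimpleGraph (V ⊕ (G.edgeSet × Fin (k - 1))) :=
  SimpleGraph.fromRel (subdivRel G k)

lemma adj_inl_inr {V : Type*} [LinearOrder V] (G : SimpleGraph V)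
    (e : G.edgeSet) (i : Fin (2 - 1)) {a : V} (ha : a ∈ (e : Sym2 V)) :
    (kSubdivision G 2).Adj (Sum.inl a) (Sum.inr (e, i)) := by
  rw [kSubdivision, SimpleGraph.fromRel_adj]
  refine ⟨by simp, Or.inl ?_⟩
  have hi : i.val = 0 := by have := i.isLt; omega
  refine ⟨ha, ?_⟩
  obtain ⟨x, y, hxy⟩ : ∃ x y, (e : Sym2 V) = s(x, y) :=
    (e : Sym2 V).inductionOn (fun x y => ⟨x, y, rfl⟩)
  rw [hxy] at ha ⊢
  rw [Sym2.mem_iff] at ha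
  rcases ha with rfl | rfl
  · rcases le_total a y with h | h
    · exact Or.inl ⟨hi, by simp [Sym2.mem_iff, h]⟩
    · exact Or.inr ⟨by omega, by simp [Sym2.mem_iff, h]⟩
  · rcases le_total x a with h | h
    · exact Or.inr ⟨by omega, by simp [Sym2.mem_iff, h]⟩
    · exact Or.inl ⟨hi, by simp [Sym2.mem_iff, h]⟩

theorem stmt_6 {V : Type*} [Fintype V] [LinearOrder V] (G : SimpleGraph V) :
    coevenDomNum (kSubdivision G 2) ≤ Fintype.card V := by
  classical
  set D : Finset (V ⊕ (G.edgeSet × Fin (2 - 1))) := Finset.univ.image Sum.inl with hD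
  have hcard : D.card = Fintype.card V := by
    rw [hD, Finset.card_image_of_injective _ Sum.inl_injective, Finset.card_univ]
  apply Nat.sInf_le
  refine ⟨D, ⟨?_, ?_⟩, hcard⟩
  · intro v hv
    match v with
    | Sum.inl a => exact absurd (by simp [hD]) hv
    | Sum.inr (e, i) =>
      obtain ⟨x, y, hxy⟩ : ∃ x y, (e : Sym2 V) = s(x, y) :=
        (e : Sym2 V).inductionOn (fun x y => ⟨x, y, rfl⟩)
      exact ⟨Sum.inl x, by simp [hD], adj_inl_inr G e i (by rw [hxy]; simp)⟩
  · intro v hv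
    match v with
    | Sum.inl a => exact absurd (by simp [hD]) hv
    | Sum.inr (e, i) =>
      obtain ⟨x, y, hxy⟩ : ∃ x y, (e : Sym2 V) = s(x, y) :=
        (e : Sym2 V).inductionOn (fun x y => ⟨x, y, rfl⟩)
      have hne : x ≠ y := by
        have hadj : G.Adj x y := by
          rw [← SimpleGraph.mem_edgeSet, ← hxy]
          exact e.2
        exact hadj.ne
      have key : (kSubdivision G 2).neighborFinset (Sum.inr (e, i)) =
          {Sum.inl x, Sum.inl y} := by
        ext w
        simp only [SimpleGraph.mem_neighborFinset, Finset.mem_insert, Finset.mem_singleton]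
        constructor
        · intro hadj
          rw [kSubdivision, SimpleGraph.fromRel_adj] at hadj
          obtain ⟨-, h | h⟩ := hadj
          · match w with
            | Sum.inl b => exact h.elim
            | Sum.inr (f, j) =>
              exact absurd h.2 (by have := i.isLt; have := j.isLt; omega)
          · match w with
            | Sum.inl b =>
              have hb := h.1
              rw [hxy, Sym2.mem_iff] at hb
              rcases hb with rfl | rfl
              · exact Or.inl rfl
              · exact Or.inr rfl
            | Sum.inr (f, j) =>
              exact absurd h.2 (by have := i.isLt; have := j.isLt; omega)
        · rintro (rfl | rfl)
          · exact (adj_inl_inr G e i (by rw [hxy]; simp)).symm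
          · exact (adj_inl_inr G e i (by rw [hxy]; simp)).symm
      have : (kSubdivision G 2).degree (Sum.inr (e, i)) = 2 := by
        rw [SimpleGraph.degree, key]
        rw [Finset.card_insert_of_notMem (by simp [hne]), Finset.card_singleton]
      rw [this]
      exact even_two
end

section
/- Let G be a finite simple graph and let n ≥ 4 be an integer. Then γ_coe(G^{1/n}) ≤ |V(G)| + ⌈(n−3)/3⌉ · |E(G)|. -/
open scoped Classical

section Aux

lemma sym2_exists_min {V : Type*} [LinearOrder V] (s : Sym2 V) :
    ∃ a ∈ s, ∀ b ∈ s, a ≤ b := by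
  refine Sym2.ind ?_ s
  intro x y
  refine ⟨min x y, ?_, ?_⟩
  · rw [Sym2.mem_iff]
    rcases le_total x y with h | h
    · exact Or.inl (min_eq_left h)
    · exact Or.inr (min_eq_right h)
  · intro b hb
    rw [Sym2.mem_iff] at hb
    rcases hb with rfl | rfl
    · exact min_le_left _ _
    · exact min_le_right _ _

lemma sym2_exists_max {V : Type*} [LinearOrder V] (s : Sym2 V) :
    ∃ a ∈ s, ∀ b ∈ s, b ≤ a := by
  refine Sym2.ind ?_ s
  intro x y
  refine ⟨max x y, ?_, ?_⟩
  · rw [Sym2.mem_iff]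
    rcases le_total x y with h | h
    · exact Or.inr (max_eq_right h)
    · exact Or.inl (max_eq_left h)
  · intro b hb
    rw [Sym2.mem_iff] at hb
    rcases hb with rfl | rfl
    · exact le_max_left _ _
    · exact le_max_right _ _

lemma rel_inr_inl {V : Type*} [LinearOrder V] {G : SimpleGraph V} {k : ℕ}
    {p : G.edgeSet × Fin (k - 1)} {a : V} :
    subdivRel G k (Sum.inr p) (Sum.inl a) ↔ False := Iff.rfl

lemma rel_inr_inr {V : Type*} [LinearOrder V] {G : SimpleGraph V} {k : ℕ}
    {e f : G.edgeSet} {i j : Fin (k - 1)} :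
    subdivRel G k (Sum.inr (e, i)) (Sum.inr (f, j)) ↔ e = f ∧ j.val = i.val + 1 := Iff.rfl

lemma rel_inl_inr {V : Type*} [LinearOrder V] {G : SimpleGraph V} {k : ℕ}
    {a : V} {e : G.edgeSet} {i : Fin (k - 1)} :
    subdivRel G k (Sum.inl a) (Sum.inr (e, i)) ↔
      a ∈ (e : Sym2 V) ∧
        ((i.val = 0 ∧ ∀ b ∈ (e : Sym2 V), a ≤ b) ∨
          (i.val = k - 2 ∧ ∀ b ∈ (e : Sym2 V), b ≤ a)) := Iff.rfl

lemma inr_inj_val {V : Type*} {E : Type*} {k : ℕ} {e f : E} {i j : Fin k}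
    (h : (Sum.inr (e, i) : V ⊕ (E × Fin k)) = Sum.inr (f, j)) : i.val = j.val := by
  injection h with h'
  exact congrArg Fin.val (congrArg Prod.snd h')

/-- Every internal (subdivision) vertex has degree 2 in the k-subdivision, when k ≥ 4. -/
lemma degree_inr {V : Type*} [Fintype V] [LinearOrder V] (G : SimpleGraph V)
    (n : ℕ) (hn : 4 ≤ n) (e : G.edgeSet) (i : Fin (n - 1)) :
    (kSubdivision G n).degree (Sum.inr (e, i)) = 2 := by
  obtain ⟨a, ha, hamin⟩ := sym2_exists_min (e : Sym2 V)
  obtain ⟨b, hb, hbmax⟩ := sym2_exists_max (e : Sym2 V)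
  have hilt : i.val < n - 1 := i.isLt
  rw [SimpleGraph.degree]
  rcases Nat.eq_zero_or_pos i.val with hi0 | hipos
  · -- i = 0 : neighbors are inl a and inr (e, 1)
    have h1lt : (1 : ℕ) < n - 1 := by omega
    have hset : (kSubdivision G n).neighborFinset (Sum.inr (e, i)) =
        {Sum.inl a, Sum.inr (e, (⟨1, h1lt⟩ : Fin (n - 1)))} := by
      ext w
      rw [SimpleGraph.mem_neighborFinset, kSubdivision, SimpleGraph.fromRel_adj]
      constructor
      · rintro ⟨hne, hrel⟩
        rcases w with c | ⟨f, j⟩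
        · rcases hrel with hr | hr
          · exact (rel_inr_inl.mp hr).elim
          · obtain ⟨hce, hor⟩ := rel_inl_inr.mp hr
            rcases hor with ⟨_, hcmin⟩ | ⟨hi2, _⟩
            · have : c = a := le_antisymm (hcmin a ha) (hamin c hce)
              simp [this]
            · omega
        · rcases hrel with hr | hr
          · obtain ⟨rfl, hj⟩ := rel_inr_inr.mp hr
            have : j = (⟨1, h1lt⟩ : Fin (n - 1)) := Fin.ext (show j.val = 1 by omega)
            simp [this]
          · obtain ⟨rfl, hj⟩ := rel_inr_inr.mp hr
            omega
      · intro hw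
        rcases Finset.mem_insert.mp hw with rfl | hw
        · refine ⟨by simp, Or.inr (rel_inl_inr.mpr ⟨ha, Or.inl ⟨hi0, hamin⟩⟩)⟩
        · rw [Finset.mem_singleton] at hw
          subst hw
          refine ⟨?_, Or.inl (rel_inr_inr.mpr ⟨rfl, show (1 : ℕ) = i.val + 1 by omega⟩)⟩
          intro h
          have h2 : i.val = 1 := inr_inj_val h
          omega
    rw [hset, Finset.card_pair (by simp)]
  · rcases Nat.lt_or_ge i.val (n - 2) with hilt2 | hige
    · -- 0 < i < n-2 : neighbors are inr (e, i-1) and inr (e, i+1)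
      have hm1 : i.val - 1 < n - 1 := by omega
      have hp1 : i.val + 1 < n - 1 := by omega
      have hset : (kSubdivision G n).neighborFinset (Sum.inr (e, i)) =
          {Sum.inr (e, (⟨i.val - 1, hm1⟩ : Fin (n - 1))),
           Sum.inr (e, (⟨i.val + 1, hp1⟩ : Fin (n - 1)))} := by
        ext w
        rw [SimpleGraph.mem_neighborFinset, kSubdivision, SimpleGraph.fromRel_adj]
        constructor
        · rintro ⟨hne, hrel⟩
          rcases w with c | ⟨f, j⟩
          · rcases hrel with hr | hr
            · exact (rel_inr_inl.mp hr).elim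
            · obtain ⟨hce, hor⟩ := rel_inl_inr.mp hr
              rcases hor with ⟨h0, _⟩ | ⟨h2, _⟩ <;> omega
          · rcases hrel with hr | hr
            · obtain ⟨rfl, hj⟩ := rel_inr_inr.mp hr
              have : j = (⟨i.val + 1, hp1⟩ : Fin (n - 1)) :=
                Fin.ext (show j.val = i.val + 1 by omega)
              simp [this]
            · obtain ⟨rfl, hj⟩ := rel_inr_inr.mp hr
              have : j = (⟨i.val - 1, hm1⟩ : Fin (n - 1)) :=
                Fin.ext (show j.val = i.val - 1 by omega)
              simp [this]
        · intro hw
          rcases Finset.mem_insert.mp hw with rfl | hw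
          · refine ⟨?_, Or.inr (rel_inr_inr.mpr ⟨rfl, show i.val = (i.val - 1) + 1 by omega⟩)⟩
            intro h
            have h2 : i.val = i.val - 1 := inr_inj_val h
            omega
          · rw [Finset.mem_singleton] at hw
            subst hw
            refine ⟨?_, Or.inl (rel_inr_inr.mpr ⟨rfl, show i.val + 1 = i.val + 1 by omega⟩)⟩
            intro h
            have h2 : i.val = i.val + 1 := inr_inj_val h
            omega
      rw [hset, Finset.card_pair]
      intro h
      have h2 : i.val - 1 = i.val + 1 := inr_inj_val h
      omega
    · -- i = n - 2 : neighbors are inl b and inr (e, n-3)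
      have hieq : i.val = n - 2 := by omega
      have hm1 : i.val - 1 < n - 1 := by omega
      have hset : (kSubdivision G n).neighborFinset (Sum.inr (e, i)) =
          {Sum.inl b, Sum.inr (e, (⟨i.val - 1, hm1⟩ : Fin (n - 1)))} := by
        ext w
        rw [SimpleGraph.mem_neighborFinset, kSubdivision, SimpleGraph.fromRel_adj]
        constructor
        · rintro ⟨hne, hrel⟩
          rcases w with c | ⟨f, j⟩
          · rcases hrel with hr | hr
            · exact (rel_inr_inl.mp hr).elim
            · obtain ⟨hce, hor⟩ := rel_inl_inr.mp hr
              rcases hor with ⟨h0, _⟩ | ⟨_, hcmax⟩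
              · omega
              · have : c = b := le_antisymm (hbmax c hce) (hcmax b hb)
                simp [this]
          · rcases hrel with hr | hr
            · obtain ⟨rfl, hj⟩ := rel_inr_inr.mp hr
              have : j.val < n - 1 := j.isLt
              omega
            · obtain ⟨rfl, hj⟩ := rel_inr_inr.mp hr
              have : j = (⟨i.val - 1, hm1⟩ : Fin (n - 1)) :=
                Fin.ext (show j.val = i.val - 1 by omega)
              simp [this]
        · intro hw
          rcases Finset.mem_insert.mp hw with rfl | hw
          · refine ⟨by simp, Or.inr (rel_inl_inr.mpr ⟨hb, Or.inr ⟨hieq, hbmax⟩⟩)⟩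
          · rw [Finset.mem_singleton] at hw
            subst hw
            refine ⟨?_, Or.inr (rel_inr_inr.mpr ⟨rfl, show i.val = (i.val - 1) + 1 by omega⟩)⟩
            intro h
            have h2 : i.val = i.val - 1 := inr_inj_val h
            omega
      rw [hset, Finset.card_pair (by simp)]

end Aux

theorem stmt_8 {V : Type*} [Fintype V] [LinearOrder V] (G : SimpleGraph V)
    (n : ℕ) (hn : 4 ≤ n) :
    coevenDomNum (kSubdivision G n) ≤
      Fintype.card V + ((n - 3) + 2) / 3 * Fintype.card G.edgeSet := by
  classical
  set Q : Fin (n - 1) → Prop :=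
    fun i => (i.val % 3 = 2 ∧ i.val ≤ n - 3) ∨ (i.val = n - 3 ∧ (n - 3) % 3 = 1) with hQ
  set D : Finset (V ⊕ (G.edgeSet × Fin (n - 1))) :=
    (Finset.univ.image Sum.inl) ∪
      ((Finset.univ ×ˢ Finset.univ.filter Q).image Sum.inr) with hD
  have hVmem : ∀ c : V, Sum.inl c ∈ D := fun c =>
    Finset.mem_union_left _ (Finset.mem_image_of_mem _ (Finset.mem_univ c))
  have hQmem : ∀ (e : G.edgeSet) (i : Fin (n - 1)), Q i → Sum.inr (e, i) ∈ D := by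
    intro e i hQi
    refine Finset.mem_union_right _ (Finset.mem_image_of_mem _ ?_)
    exact Finset.mem_product.mpr ⟨Finset.mem_univ _, Finset.mem_filter.mpr ⟨Finset.mem_univ _, hQi⟩⟩
  have hcoe : IsCoevenDomSet (kSubdivision G n) D := by
    constructor
    · -- domination
      intro v hv
      rcases v with c | ⟨e, i⟩
      · exact absurd (hVmem c) hv
      · have hnQ : ¬ Q i := fun h => hv (hQmem e i h)
        have hilt : i.val < n - 1 := i.isLt
        rcases Nat.eq_zero_or_pos i.val with hi0 | hipos
        · obtain ⟨a, ha, hamin⟩ := sym2_exists_min (e : Sym2 V)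
          refine ⟨Sum.inl a, hVmem a, ?_⟩
          rw [kSubdivision, SimpleGraph.fromRel_adj]
          exact ⟨by simp, Or.inl (rel_inl_inr.mpr ⟨ha, Or.inl ⟨hi0, hamin⟩⟩)⟩
        · rcases Nat.lt_or_ge i.val (n - 2) with hilt2 | hige
          · -- 1 ≤ i ≤ n - 3
            have hile : i.val ≤ n - 3 := by omega
            have h2 : i.val % 3 ≠ 2 := fun h => hnQ (Or.inl ⟨h, hile⟩)
            have h3 : i.val % 3 = 0 ∨ i.val % 3 = 1 := by omega
            rcases h3 with h0 | h1
            · -- i % 3 = 0 : use i - 1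
              have hm1 : i.val - 1 < n - 1 := by omega
              refine ⟨Sum.inr (e, ⟨i.val - 1, hm1⟩),
                hQmem e _ (Or.inl ⟨show (i.val - 1) % 3 = 2 by omega,
                  show i.val - 1 ≤ n - 3 by omega⟩), ?_⟩
              rw [kSubdivision, SimpleGraph.fromRel_adj]
              refine ⟨?_, Or.inl (rel_inr_inr.mpr ⟨rfl, show i.val = (i.val - 1) + 1 by omega⟩)⟩
              intro h
              have hx : i.val - 1 = i.val := inr_inj_val h
              omega
            · -- i % 3 = 1 : use i + 1
              have hne : i.val ≠ n - 3 := fun h => hnQ (Or.inr ⟨h, by omega⟩)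
              have hp1 : i.val + 1 < n - 1 := by omega
              refine ⟨Sum.inr (e, ⟨i.val + 1, hp1⟩),
                hQmem e _ (Or.inl ⟨show (i.val + 1) % 3 = 2 by omega,
                  show i.val + 1 ≤ n - 3 by omega⟩), ?_⟩
              rw [kSubdivision, SimpleGraph.fromRel_adj]
              refine ⟨?_, Or.inr (rel_inr_inr.mpr ⟨rfl, show i.val + 1 = i.val + 1 by omega⟩)⟩
              intro h
              have hx : i.val + 1 = i.val := inr_inj_val h
              omega
          · -- i = n - 2
            obtain ⟨b, hb, hbmax⟩ := sym2_exists_max (e : Sym2 V)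
            refine ⟨Sum.inl b, hVmem b, ?_⟩
            rw [kSubdivision, SimpleGraph.fromRel_adj]
            exact ⟨by simp, Or.inl (rel_inl_inr.mpr ⟨hb, Or.inr ⟨by omega, hbmax⟩⟩)⟩
    · -- co-even: vertices outside D are internal, of degree 2
      intro v hv
      rcases v with c | ⟨e, i⟩
      · exact absurd (hVmem c) hv
      · rw [degree_inr G n hn e i]
        exact even_two
  have hle : coevenDomNum (kSubdivision G n) ≤ D.card :=
    Nat.sInf_le ⟨D, hcoe, rfl⟩
  refine hle.trans ?_
  have hfiltercard : (Finset.univ.filter Q).card ≤ ((n - 3) + 2) / 3 := by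
    have := Finset.card_le_card_of_injOn (fun i : Fin (n - 1) => i.val / 3)
      (s := Finset.univ.filter Q) (t := Finset.range (((n - 3) + 2) / 3))
      (fun i hi => by
        have hQi : Q i := (Finset.mem_filter.mp hi).2
        rw [Finset.mem_coe, Finset.mem_range]
        show i.val / 3 < ((n - 3) + 2) / 3
        rcases hQi with ⟨h2, hle'⟩ | ⟨heq, hmod⟩ <;> omega)
      (fun i hi j hj hij => by
        have hQi : Q i := by simpa using hi
        have hQj : Q j := by simpa using hj
        have hij' : i.val / 3 = j.val / 3 := hij
        have : i.val = j.val := by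
          rcases hQi with ⟨h2, hle'⟩ | ⟨heq, hmod⟩ <;>
            rcases hQj with ⟨h2', hle''⟩ | ⟨heq', hmod'⟩ <;> omega
        exact Fin.ext this)
    simpa [Finset.card_range] using this
  calc D.card ≤ (Finset.univ.image (Sum.inl : V → V ⊕ (G.edgeSet × Fin (n - 1)))).card +
        ((Finset.univ ×ˢ Finset.univ.filter Q).image
          (Sum.inr : G.edgeSet × Fin (n - 1) → V ⊕ (G.edgeSet × Fin (n - 1)))).card :=
        Finset.card_union_le _ _
    _ = Fintype.card V + (Finset.univ ×ˢ Finset.univ.filter Q).card := by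
        rw [Finset.card_image_of_injective _ Sum.inl_injective,
          Finset.card_image_of_injective _ Sum.inr_injective, Finset.card_univ]
    _ = Fintype.card V + Fintype.card G.edgeSet * (Finset.univ.filter Q).card := by
        rw [Finset.card_product, Finset.card_univ]
    _ ≤ Fintype.card V + Fintype.card G.edgeSet * (((n - 3) + 2) / 3) :=
        Nat.add_le_add_left (Nat.mul_le_mul_left _ hfiltercard) _
    _ = Fintype.card V + ((n - 3) + 2) / 3 * Fintype.card G.edgeSet := by
        rw [Nat.mul_comm]
end

section
/- For every integer n ≥ 4 and every integer i ≥ 1, the number of dominating sets of the path P_n of cardinality i satisfies the recursion d(P_n, i) = d(P_{n−1}, i−1) + d(P_{n−2}, i−1) + d(P_{n−3}, i−1). -/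
open scoped Classical

/-- The number of dominating sets of the path graph on n vertices with
cardinality i. -/
noncomputable def dPath (n i : ℕ) : ℕ :=
  (Finset.univ.filter fun D : Finset (Fin n) =>
    IsDomSet (SimpleGraph.pathGraph n) D ∧ D.card = i).card

/-- domination predicate transferred to ℕ -/
def Qd (n : ℕ) (D : Finset ℕ) : Prop :=
  ∀ v < n, v ∉ D → (v + 1 ∈ D ∨ ∃ u ∈ D, u + 1 = v)

/-- chain condition -/
def Ch (D : Finset ℕ) : Prop :=
  ∀ x ∈ D, ∀ y ∈ D, x < y → (x + 1 ∈ D ∨ x + 2 ∈ D ∨ x + 3 ∈ D)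

/-- counted family: subsets with max `j`, min ≤ 1, chain condition, cardinality `k` -/
noncomputable def Gs (j k : ℕ) : Finset (Finset ℕ) :=
  (Finset.range (j+1)).powerset.filter fun E =>
    (0 ∈ E ∨ 1 ∈ E) ∧ Ch E ∧ j ∈ E ∧ E.card = k

lemma dPath_eq_nat (n i : ℕ) :
    dPath n i = ((Finset.range n).powerset.filter fun D => Qd n D ∧ D.card = i).card := by
  classical
  apply Finset.card_bij (fun D _ => D.map Fin.valEmbedding)
  · rintro D hD
    simp only [Finset.mem_filter, Finset.mem_univ, true_and] at hD
    obtain ⟨hdom, hcard⟩ := hD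
    simp only [Finset.mem_filter, Finset.mem_powerset]
    refine ⟨?_, ?_, by simpa using hcard⟩
    · intro x hx
      simp only [Finset.mem_map, Fin.valEmbedding_apply] at hx
      obtain ⟨u, _, rfl⟩ := hx
      exact Finset.mem_range.mpr u.isLt
    · intro v hv hvD
      have hvD' : (⟨v, hv⟩ : Fin n) ∉ D := by
        intro h
        exact hvD (Finset.mem_map.mpr ⟨_, h, rfl⟩)
      obtain ⟨u, huD, hadj⟩ := hdom _ hvD'
      rw [SimpleGraph.pathGraph_adj] at hadj
      rcases hadj with h | h
      · exact Or.inr ⟨u.val, Finset.mem_map.mpr ⟨u, huD, rfl⟩, h⟩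
      · left
        have : u.val = v + 1 := h.symm
        rw [← this]
        exact Finset.mem_map.mpr ⟨u, huD, rfl⟩
  · intro D₁ h₁ D₂ h₂ h
    exact Finset.map_injective _ h
  · intro E hE
    simp only [Finset.mem_filter, Finset.mem_powerset] at hE
    obtain ⟨hsub, hQ, hcard⟩ := hE
    have hlt : ∀ m ∈ E, m < n := fun m hm => Finset.mem_range.mp (hsub hm)
    refine ⟨E.attachFin hlt, ?_, ?_⟩
    · simp only [Finset.mem_filter, Finset.mem_univ, true_and]
      constructor
      · intro v hv
        have hvE : v.val ∉ E := by
          intro h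
          exact hv ((Finset.mem_attachFin hlt).mpr h)
        rcases hQ v.val v.isLt hvE with h | ⟨u, huE, hu⟩
        · have hlt' : v.val + 1 < n := hlt _ h
          exact ⟨⟨v.val + 1, hlt'⟩, (Finset.mem_attachFin hlt).mpr h,
            SimpleGraph.pathGraph_adj.mpr (Or.inr rfl)⟩
        · exact ⟨⟨u, hlt _ huE⟩, (Finset.mem_attachFin hlt).mpr huE,
            SimpleGraph.pathGraph_adj.mpr (Or.inl hu)⟩
      · rw [Finset.card_attachFin]; exact hcard
    · ext x
      simp [Finset.mem_map, Finset.mem_attachFin]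

lemma Qd_iff (m : ℕ) (D : Finset ℕ) (hsub : D ⊆ Finset.range (m+2)) :
    Qd (m+2) D ↔ (0 ∈ D ∨ 1 ∈ D) ∧ Ch D ∧ (m+1 ∈ D ∨ m ∈ D) := by
  have hbd : ∀ x ∈ D, x ≤ m + 1 := fun x hx => by
    have := Finset.mem_range.mp (hsub hx); omega
  constructor
  · intro hQ
    refine ⟨?_, ?_, ?_⟩
    · by_cases h0 : 0 ∈ D
      · exact Or.inl h0
      · rcases hQ 0 (by omega) h0 with h | ⟨u, _, hu⟩
        · exact Or.inr h
        · omega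
    · intro x hx y hy hxy
      by_contra hcon
      push_neg at hcon
      obtain ⟨h1, h2, h3⟩ := hcon
      have hy1 : y ≠ x + 1 := fun h => h1 (h ▸ hy)
      have hy2 : y ≠ x + 2 := fun h => h2 (h ▸ hy)
      have hy3 : y ≠ x + 3 := fun h => h3 (h ▸ hy)
      have hyb := hbd y hy
      have hv : x + 2 < m + 2 := by omega
      rcases hQ (x + 2) hv h2 with h | ⟨u, huD, hu⟩
      · exact h3 h
      · have : u = x + 1 := by omega
        exact h1 (this ▸ huD)
    · by_cases hl : m + 1 ∈ D
      · exact Or.inl hl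
      · rcases hQ (m + 1) (by omega) hl with h | ⟨u, huD, hu⟩
        · have := hbd _ h; omega
        · have : u = m := by omega
          exact Or.inr (this ▸ huD)
  · rintro ⟨h01, hCh, hlast⟩ v hv hvD
    by_contra hcon
    push_neg at hcon
    obtain ⟨hc1, hc2⟩ := hcon
    -- small cases
    rcases Nat.lt_or_ge v 2 with hv2 | hv2
    · interval_cases v
      · rcases h01 with h | h
        · exact hvD h
        · exact hc1 h
      · rcases h01 with h | h
        · exact hc2 0 h rfl
        · exact hvD h
    · -- v ≥ 2
      have hFne : (D.filter (· < v)).Nonempty := by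
        rcases h01 with h | h
        · exact ⟨0, Finset.mem_filter.mpr ⟨h, by omega⟩⟩
        · exact ⟨1, Finset.mem_filter.mpr ⟨h, by omega⟩⟩
      set x := (D.filter (· < v)).max' hFne with hxdef
      have hxF := (D.filter (· < v)).max'_mem hFne
      have hxD : x ∈ D := (Finset.mem_filter.mp hxF).1
      have hxv : x < v := (Finset.mem_filter.mp hxF).2
      have hmax : ∀ z ∈ D, z < v → z ≤ x := fun z hz hzv =>
        (D.filter (· < v)).le_max' z (Finset.mem_filter.mpr ⟨hz, hzv⟩)
      have hx1 : x + 1 ≠ v := hc2 x hxD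
      have hkey : ∀ c ∈ D, x < c → c ≤ x + 3 → False := by
        intro c hc h1c h2c
        have hcv : ¬ c < v := fun hlt => by have := hmax c hc hlt; omega
        have hcne : c ≠ v := fun h => hvD (h ▸ hc)
        have : c = v + 1 := by omega
        exact hc1 (this ▸ hc)
      -- there is an element of D above x
      have hy : ∃ y ∈ D, x < y := by
        rcases hlast with h | h
        · exact ⟨m + 1, h, by omega⟩
        · exact ⟨m, h, by omega⟩
      obtain ⟨y, hyD, hxy⟩ := hy
      rcases hCh x hxD y hyD hxy with h | h | h
      · exact hkey _ h (by omega) (by omega)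
      · exact hkey _ h (by omega) (by omega)
      · exact hkey _ h (by omega) (by omega)

lemma Gs_eq_biUnion (j k : ℕ) (hj : 2 ≤ j) :
    Gs j (k+1) = (Finset.Ico (j-3) j).biUnion (fun s => (Gs s k).image (insert j)) := by
  ext E
  simp only [Gs, Finset.mem_biUnion, Finset.mem_Ico, Finset.mem_image,
    Finset.mem_filter, Finset.mem_powerset]
  constructor
  · rintro ⟨hsub, h01, hCh, hjE, hcard⟩
    set E' := E.erase j with hE'def
    have hlow : 0 ∈ E' ∨ 1 ∈ E' := by
      rcases h01 with h | h
      · exact Or.inl (Finset.mem_erase.mpr ⟨by omega, h⟩)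
      · exact Or.inr (Finset.mem_erase.mpr ⟨by omega, h⟩)
    have hne : E'.Nonempty := by
      rcases hlow with h | h
      exacts [⟨0, h⟩, ⟨1, h⟩]
    set s := E'.max' hne with hs
    have hsE' : s ∈ E' := E'.max'_mem hne
    have hsE : s ∈ E := Finset.mem_of_mem_erase hsE'
    have hsne : s ≠ j := (Finset.mem_erase.mp hsE').1
    have hslt : s < j := by
      have := Finset.mem_range.mp (hsub hsE)
      omega
    have hmax : ∀ x ∈ E', x ≤ s := fun x hx => E'.le_max' x hx
    have hsj : j ≤ s + 3 := by
      rcases hCh s hsE j hjE hslt with h | h | h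
      · rcases eq_or_ne (s+1) j with h2 | hne2
        · omega
        · have := hmax _ (Finset.mem_erase.mpr ⟨hne2, h⟩); omega
      · rcases eq_or_ne (s+2) j with h2 | hne2
        · omega
        · have := hmax _ (Finset.mem_erase.mpr ⟨hne2, h⟩); omega
      · rcases eq_or_ne (s+3) j with h2 | hne2
        · omega
        · have := hmax _ (Finset.mem_erase.mpr ⟨hne2, h⟩); omega
    refine ⟨s, ⟨by omega, hslt⟩, E', ⟨?_, hlow, ?_, hsE', ?_⟩, ?_⟩
    · intro x hx
      exact Finset.mem_range.mpr (by have := hmax x hx; omega)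
    · intro x hx y hy hxy
      have hyj : y < j := by have := hmax y hy; omega
      have hxE : x ∈ E := Finset.mem_of_mem_erase hx
      have hyE : y ∈ E := Finset.mem_of_mem_erase hy
      rcases hCh x hxE y hyE hxy with h | h | h
      · rcases eq_or_ne (x+1) j with h2 | hne2
        · omega
        · exact Or.inl (Finset.mem_erase.mpr ⟨hne2, h⟩)
      · rcases eq_or_ne (x+2) j with h2 | hne2
        · -- x+2 = j, but y < j, y > x so y = x+1, y ∈ E'
          have hyx : y = x + 1 := by omega
          exact Or.inl (by rwa [hyx] at hy)
        · exact Or.inr (Or.inl (Finset.mem_erase.mpr ⟨hne2, h⟩))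
      · rcases eq_or_ne (x+3) j with h2 | hne2
        · -- y ∈ {x+1, x+2}
          rcases (by omega : y = x + 1 ∨ y = x + 2) with rfl | rfl
          · exact Or.inl hy
          · exact Or.inr (Or.inl hy)
        · exact Or.inr (Or.inr (Finset.mem_erase.mpr ⟨hne2, h⟩))
    · simp [hE'def, Finset.card_erase_of_mem hjE, hcard]
    · exact Finset.insert_erase hjE
  · rintro ⟨s, ⟨hs1, hs2⟩, E', ⟨hsub, h01, hCh, hsE', hcard⟩, rfl⟩
    have hbd : ∀ x ∈ E', x ≤ s := fun x hx => by
      have := Finset.mem_range.mp (hsub hx); omega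
    have hjE' : j ∉ E' := fun h => by have := hbd _ h; omega
    refine ⟨?_, ?_, ?_, Finset.mem_insert_self _ _, ?_⟩
    · intro x hx
      rcases Finset.mem_insert.mp hx with rfl | hx
      · exact Finset.mem_range.mpr (by omega)
      · exact Finset.mem_range.mpr (by have := hbd _ hx; omega)
    · rcases h01 with h | h
      exacts [Or.inl (Finset.mem_insert_of_mem h), Or.inr (Finset.mem_insert_of_mem h)]
    · intro x hx y hy hxy
      rcases Finset.mem_insert.mp hx with rfl | hx
      · rcases Finset.mem_insert.mp hy with rfl | hy
        · omega
        · have := hbd _ hy; omega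
      · rcases eq_or_ne x s with hxeq | hxs
        · have : j = x + 1 ∨ j = x + 2 ∨ j = x + 3 := by omega
          rcases this with h | h | h
          · exact Or.inl (h ▸ Finset.mem_insert_self _ _)
          · exact Or.inr (Or.inl (h ▸ Finset.mem_insert_self _ _))
          · exact Or.inr (Or.inr (h ▸ Finset.mem_insert_self _ _))
        · have hxlt : x < s := by have := hbd _ hx; omega
          rcases hCh x hx s hsE' hxlt with h | h | h
          · exact Or.inl (Finset.mem_insert_of_mem h)
          · exact Or.inr (Or.inl (Finset.mem_insert_of_mem h))
          · exact Or.inr (Or.inr (Finset.mem_insert_of_mem h))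
    · rw [Finset.card_insert_of_notMem hjE', hcard]

lemma Gs_card_rec (j k : ℕ) (hj : 2 ≤ j) :
    (Gs j (k+1)).card = ∑ s ∈ Finset.Ico (j-3) j, (Gs s k).card := by
  rw [Gs_eq_biUnion j k hj, Finset.card_biUnion]
  · apply Finset.sum_congr rfl
    intro s hs
    have hs' := Finset.mem_Ico.mp hs
    apply Finset.card_image_of_injOn
    intro E₁ h₁' E₂ h₂' hins
    have h₁ : E₁ ∈ Gs s k := h₁'
    have h₂ : E₂ ∈ Gs s k := h₂'
    have hj1 : j ∉ E₁ := by
      rw [Gs, Finset.mem_filter, Finset.mem_powerset] at h₁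
      intro h; have := Finset.mem_range.mp (h₁.1 h); omega
    have hj2 : j ∉ E₂ := by
      rw [Gs, Finset.mem_filter, Finset.mem_powerset] at h₂
      intro h; have := Finset.mem_range.mp (h₂.1 h); omega
    have := congrArg (Finset.erase · j) hins
    simpa [Finset.erase_insert hj1, Finset.erase_insert hj2] using this
  · intro s₁ hs₁ s₂ hs₂ hne
    simp only [Finset.mem_coe, Finset.mem_Ico] at hs₁ hs₂
    rw [Function.onFun, Finset.disjoint_left]
    rintro E hE₁ hE₂
    simp only [Finset.mem_image] at hE₁ hE₂
    obtain ⟨F₁, hF₁, rfl⟩ := hE₁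
    obtain ⟨F₂, hF₂, hEq⟩ := hE₂
    simp only [Gs, Finset.mem_filter, Finset.mem_powerset] at hF₁ hF₂
    have hj1 : j ∉ F₁ := by
      intro h; have := Finset.mem_range.mp (hF₁.1 h); omega
    have hj2 : j ∉ F₂ := by
      intro h; have := Finset.mem_range.mp (hF₂.1 h); omega
    have hFeq : F₂ = F₁ := by
      have := congrArg (Finset.erase · j) hEq
      simpa [Finset.erase_insert hj1, Finset.erase_insert hj2] using this
    -- s₁ ∈ F₁, s₂ ∈ F₂ = F₁, each bounded by the other
    have h1 : s₁ ∈ F₁ := hF₁.2.2.2.1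
    have h2 : s₂ ∈ F₁ := hFeq ▸ hF₂.2.2.2.1
    have b1 := Finset.mem_range.mp (hF₁.1 h2)
    have b2 := Finset.mem_range.mp (hF₂.1 (hFeq ▸ h1 : s₁ ∈ F₂))
    omega

lemma dPath_split (m i : ℕ) :
    dPath (m+2) i = (Gs (m+1) i).card + (Gs m i).card := by
  have hdisj : Disjoint (Gs (m+1) i) (Gs m i) := by
    rw [Finset.disjoint_left]
    intro E h1 h2
    rw [Gs, Finset.mem_filter, Finset.mem_powerset] at h1 h2
    have := Finset.mem_range.mp (h2.1 h1.2.2.2.1)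
    omega
  rw [dPath_eq_nat, ← Finset.card_union_of_disjoint hdisj]
  congr 1
  ext D
  simp only [Finset.mem_filter, Finset.mem_powerset, Finset.mem_union, Gs]
  constructor
  · rintro ⟨hsub, hQ, hcard⟩
    rw [Qd_iff m D hsub] at hQ
    obtain ⟨h01, hCh, hlast⟩ := hQ
    by_cases hm1 : m + 1 ∈ D
    · exact Or.inl ⟨hsub, h01, hCh, hm1, hcard⟩
    · refine Or.inr ⟨?_, h01, hCh, hlast.resolve_left hm1, hcard⟩
      intro x hx
      have hxr := Finset.mem_range.mp (hsub hx)
      refine Finset.mem_range.mpr ?_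
      rcases eq_or_ne x (m+1) with rfl | h
      · exact absurd hx hm1
      · omega
  · rintro (⟨hsub, h01, hCh, hm, hcard⟩ | ⟨hsub, h01, hCh, hm, hcard⟩)
    · exact ⟨hsub, (Qd_iff m D hsub).mpr ⟨h01, hCh, Or.inl hm⟩, hcard⟩
    · have hsub2 : D ⊆ Finset.range (m+2) := hsub.trans (by
        intro x hx
        have := Finset.mem_range.mp hx
        exact Finset.mem_range.mpr (by omega))
      exact ⟨hsub2, (Qd_iff m D hsub2).mpr ⟨h01, hCh, Or.inr hm⟩, hcard⟩

lemma dPath_one (k : ℕ) : dPath 1 k = (Gs 0 k).card := by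
  rw [dPath_eq_nat]
  congr 1
  ext D
  simp only [Gs, Finset.mem_filter, Finset.mem_powerset]
  constructor
  · rintro ⟨hsub, hQ, hcard⟩
    have h0 : 0 ∈ D := by
      by_contra h0
      rcases hQ 0 (by omega) h0 with h | ⟨u, hu, huv⟩
      · have := Finset.mem_range.mp (hsub h); omega
      · omega
    refine ⟨hsub, Or.inl h0, ?_, h0, hcard⟩
    intro x hx y hy hxy
    have := Finset.mem_range.mp (hsub hx)
    have := Finset.mem_range.mp (hsub hy)
    omega
  · rintro ⟨hsub, -, -, h0, hcard⟩
    refine ⟨hsub, ?_, hcard⟩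
    intro v hv hvD
    have hv0 : v = 0 := by omega
    exact absurd (hv0 ▸ h0) hvD

lemma sum3 (f : ℕ → ℕ) (a b c d : ℕ) (h1 : b = a + 1) (h2 : c = a + 2) (h3 : d = a + 3) :
    ∑ s ∈ Finset.Ico a d, f s = f a + f b + f c := by
  subst h1 h2 h3
  rw [Finset.sum_Ico_eq_sum_range]
  have h : a + 3 - a = 3 := by omega
  rw [h, Finset.sum_range_succ, Finset.sum_range_succ, Finset.sum_range_succ,
    Finset.sum_range_zero]
  simp

lemma sum2 (f : ℕ → ℕ) (a b c : ℕ) (h1 : b = a + 1) (h2 : c = a + 2) :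
    ∑ s ∈ Finset.Ico a c, f s = f a + f b := by
  subst h1 h2
  rw [Finset.sum_Ico_eq_sum_range]
  have h : a + 2 - a = 2 := by omega
  rw [h, Finset.sum_range_succ, Finset.sum_range_succ, Finset.sum_range_zero]
  simp

/-- Recursion for the number of dominating sets of paths. -/
theorem stmt_11 (n i : ℕ) (hn : 4 ≤ n) (hi : 1 ≤ i) :
    dPath n i = dPath (n - 1) (i - 1) + dPath (n - 2) (i - 1) + dPath (n - 3) (i - 1) := by
  obtain ⟨m, rfl⟩ : ∃ m, n = m + 4 := ⟨n - 4, by omega⟩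
  obtain ⟨t, rfl⟩ : ∃ t, i = t + 1 := ⟨i - 1, by omega⟩
  have e1 : m + 4 - 1 = m + 3 := by omega
  have e2 : m + 4 - 2 = m + 2 := by omega
  have e3 : m + 4 - 3 = m + 1 := by omega
  have e4 : t + 1 - 1 = t := by omega
  rw [e1, e2, e3, e4]
  cases m with
  | zero =>
    show dPath 4 (t+1) = dPath 3 t + dPath 2 t + dPath 1 t
    have l : dPath 4 (t+1) = (Gs 3 (t+1)).card + (Gs 2 (t+1)).card := dPath_split 2 (t+1)
    have g3 := Gs_card_rec 3 t (by omega)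
    rw [sum3 _ _ 1 2 3 (by omega) (by omega) (by omega)] at g3
    have g2 := Gs_card_rec 2 t (by omega)
    rw [sum2 _ _ 1 2 (by omega) (by omega)] at g2
    have r3 : dPath 3 t = (Gs 2 t).card + (Gs 1 t).card := dPath_split 1 t
    have r2 : dPath 2 t = (Gs 1 t).card + (Gs 0 t).card := dPath_split 0 t
    have r1 : dPath 1 t = (Gs 0 t).card := dPath_one t
    have g3' : (3:ℕ) - 3 = 0 := by omega
    rw [g3'] at g3
    have g2' : (2:ℕ) - 3 = 0 := by omega
    rw [g2'] at g2
    omega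
  | succ m' =>
    show dPath (m'+5) (t+1) = dPath (m'+4) t + dPath (m'+3) t + dPath (m'+2) t
    have l : dPath (m'+5) (t+1) = (Gs (m'+4) (t+1)).card + (Gs (m'+3) (t+1)).card :=
      dPath_split (m'+3) (t+1)
    have g4 := Gs_card_rec (m'+4) t (by omega)
    have e4' : m' + 4 - 3 = m' + 1 := by omega
    rw [e4', sum3 _ _ (m'+2) (m'+3) (m'+4) (by omega) (by omega) (by omega)] at g4
    have g3 := Gs_card_rec (m'+3) t (by omega)
    have e3' : m' + 3 - 3 = m' := by omega
    rw [e3', sum3 _ _ (m'+1) (m'+2) (m'+3) (by omega) (by omega) (by omega)] at g3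
    have r1 : dPath (m'+4) t = (Gs (m'+3) t).card + (Gs (m'+2) t).card :=
      dPath_split (m'+2) t
    have r2 : dPath (m'+3) t = (Gs (m'+2) t).card + (Gs (m'+1) t).card :=
      dPath_split (m'+1) t
    have r3 : dPath (m'+2) t = (Gs (m'+1) t).card + (Gs m' t).card :=
      dPath_split m' t
    omega
end

section
/- For n ≥ 4, the co-even domination number of the path P_n is γ_coe(P_n) = 2 + ⌈(n−4)/3⌉. -/
open scoped Classical

section Aux
open SimpleGraph Finset

lemma nbhd_eq (n : ℕ) (v : Fin n) :
    (pathGraph n).neighborFinset v =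
      (Finset.univ.filter (fun u : Fin n => u.val + 1 = v.val ∨ v.val + 1 = u.val)) := by
  ext u
  simp [pathGraph_adj, adj_comm, or_comm]

lemma deg_le (n : ℕ) (v : Fin n) : (pathGraph n).degree v ≤ 2 := by
  rw [SimpleGraph.degree, nbhd_eq]
  have : (Finset.univ.filter (fun u : Fin n => u.val + 1 = v.val ∨ v.val + 1 = u.val)).card
      ≤ ({v.val - 1, v.val + 1} : Finset ℕ).card := by
    apply Finset.card_le_card_of_injOn (fun u => u.val)
    · intro u hu
      simp only [Finset.mem_coe, Finset.mem_filter] at hu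
      simp only [Finset.mem_coe, Finset.mem_insert, Finset.mem_singleton]
      omega
    · intro a _ b _ h
      exact Fin.ext h
  calc _ ≤ _ := this
    _ ≤ 2 := Finset.card_insert_le _ _ |>.trans (by simp)

lemma deg_zero (n : ℕ) (hn : 2 ≤ n) : (pathGraph n).degree (⟨0, by omega⟩ : Fin n) = 1 := by
  rw [SimpleGraph.degree, nbhd_eq]
  have : (Finset.univ.filter (fun u : Fin n => u.val + 1 = 0 ∨ 0 + 1 = u.val))
      = {(⟨1, by omega⟩ : Fin n)} := by
    ext u; simp [Fin.ext_iff]; omega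
  rw [this]; simp

lemma deg_last (n : ℕ) (hn : 2 ≤ n) : (pathGraph n).degree (⟨n-1, by omega⟩ : Fin n) = 1 := by
  rw [SimpleGraph.degree, nbhd_eq]
  have : (Finset.univ.filter (fun u : Fin n => u.val + 1 = n-1 ∨ (n-1) + 1 = u.val))
      = {(⟨n-2, by omega⟩ : Fin n)} := by
    ext u; simp [Fin.ext_iff]; omega
  rw [this]; simp

lemma deg_mid (n : ℕ) (v : Fin n) (h0 : 0 < v.val) (h1 : v.val < n - 1) :
    (pathGraph n).degree v = 2 := by
  rw [SimpleGraph.degree, nbhd_eq]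
  have : (Finset.univ.filter (fun u : Fin n => u.val + 1 = v.val ∨ v.val + 1 = u.val))
      = {(⟨v.val - 1, by omega⟩ : Fin n), (⟨v.val + 1, by omega⟩ : Fin n)} := by
    ext u; simp [Fin.ext_iff]; omega
  rw [this]
  rw [Finset.card_insert_of_notMem (by simp only [Finset.mem_singleton, Fin.ext_iff]; omega),
    Finset.card_singleton]

section UB
variable (n : ℕ) (hn : 4 ≤ n)

/-- upper bound witness -/
lemma ub (n : ℕ) (hn : 4 ≤ n) :
    ∃ D : Finset (Fin n), IsCoevenDomSet (pathGraph n) D ∧ D.card = 2 + (n - 2) / 3 := by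
  set m := (n - 2) / 3 with hm
  have hm3 : 3 * m ≤ n - 2 ∧ n - 4 ≤ 3 * m := by constructor <;> omega
  haveI : NeZero n := ⟨by omega⟩
  set f : ℕ → Fin n := fun k => (⟨(3 * k + 3) % n, Nat.mod_lt _ (by omega)⟩ : Fin n) with hf
  have hfval : ∀ k < m, (f k).val = 3 * k + 3 := by
    intro k hk
    simp only [hf]
    exact Nat.mod_eq_of_lt (by omega)
  set D : Finset (Fin n) :=
    insert ⟨0, by omega⟩ (insert ⟨n - 1, by omega⟩ ((Finset.range m).image f)) with hD
  have hmemD : ∀ v : Fin n, v ∈ D ↔ v.val = 0 ∨ v.val = n - 1 ∨ ∃ k < m, v.val = 3 * k + 3 := by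
    intro v
    simp only [hD, Finset.mem_insert, Finset.mem_image, Finset.mem_range]
    constructor
    · rintro (rfl | rfl | ⟨k, hk, rfl⟩)
      · left; rfl
      · right; left; rfl
      · right; right; exact ⟨k, hk, hfval k hk⟩
    · rintro (h | h | ⟨k, hk, hv⟩)
      · left; exact Fin.ext h
      · right; left; exact Fin.ext h
      · right; right; exact ⟨k, hk, Fin.ext ((hfval k hk).trans hv.symm)⟩
  refine ⟨D, ⟨?_, ?_⟩, ?_⟩
  · -- dominating
    intro v hv
    rw [hmemD] at hv
    push_neg at hv
    obtain ⟨h0, h1, h2⟩ := hv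
    have hvlt := v.isLt
    by_cases hv1 : v.val = 1
    · refine ⟨⟨0, by omega⟩, ?_, ?_⟩
      · rw [hmemD]; left; rfl
      · rw [pathGraph_adj]
        show 0 + 1 = v.val ∨ v.val + 1 = 0
        omega
    by_cases hv2 : v.val = n - 2
    · refine ⟨⟨n - 1, by omega⟩, ?_, ?_⟩
      · rw [hmemD]; right; left; rfl
      · rw [pathGraph_adj]
        show (n - 1) + 1 = v.val ∨ v.val + 1 = n - 1
        omega
    · -- 2 ≤ v.val ≤ n - 3
      have hb : 2 ≤ v.val ∧ v.val ≤ n - 3 := by omega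
      set k := (v.val - 2) / 3 with hk
      have hkm : k < m := by omega
      have hne := h2 k hkm
      refine ⟨f k, ?_, ?_⟩
      · rw [hmemD]; right; right; exact ⟨k, hkm, hfval k hkm⟩
      · rw [pathGraph_adj]
        have h3 := hfval k hkm
        omega
  · -- co-even
    intro v hv
    rw [hmemD] at hv
    push_neg at hv
    have := v.isLt
    rw [deg_mid n v (by omega) (by omega)]
    decide
  · -- cardinality
    have hinj : Set.InjOn f (Finset.range m) := by
      intro a ha b hb hab
      simp only [Finset.coe_range, Set.mem_Iio] at ha hb
      have h1 := hfval a ha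
      have h2 := hfval b hb
      have h3 : (f a).val = (f b).val := by rw [hab]
      omega
    have hl1 : (⟨n - 1, by omega⟩ : Fin n) ∉ (Finset.range m).image f := by
      simp only [Finset.mem_image, Finset.mem_range, not_exists]
      rintro k ⟨hk, h⟩
      have h1 := hfval k hk
      have h2 : (f k).val = n - 1 := by rw [h]
      omega
    have hz1 : (⟨0, by omega⟩ : Fin n) ∉
        insert (⟨n - 1, by omega⟩ : Fin n) ((Finset.range m).image f) := by
      simp only [Finset.mem_insert, Finset.mem_image, Finset.mem_range, not_or, not_exists]
      refine ⟨?_, ?_⟩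
      · intro h
        have : (0 : ℕ) = n - 1 := congrArg Fin.val h
        omega
      · rintro k ⟨hk, h⟩
        have h1 := hfval k hk
        have h2 : (f k).val = 0 := by rw [h]
        omega
    rw [hD, Finset.card_insert_of_notMem hz1, Finset.card_insert_of_notMem hl1,
      Finset.card_image_of_injOn hinj, Finset.card_range]
    omega
end UB

lemma lb (n : ℕ) (hn : 4 ≤ n) (D : Finset (Fin n)) (hD : IsCoevenDomSet (pathGraph n) D) :
    2 + (n - 2) / 3 ≤ D.card := by
  obtain ⟨hdom, heven⟩ := hD
  set z : Fin n := ⟨0, by omega⟩ with hz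
  set l : Fin n := ⟨n - 1, by omega⟩ with hl
  have hzD : z ∈ D := by
    by_contra h
    have := heven z h
    rw [deg_zero n (by omega)] at this
    simp at this
  have hlD : l ∈ D := by
    by_contra h
    have := heven l h
    rw [deg_last n (by omega)] at this
    simp at this
  have hzl : z ≠ l := by simp [hz, hl, Fin.ext_iff]; omega
  -- covering
  have hcov : (Finset.univ : Finset (Fin n)) ⊆
      D.biUnion (fun u => insert u ((pathGraph n).neighborFinset u)) := by
    intro v _
    rw [Finset.mem_biUnion]
    by_cases hv : v ∈ D
    · exact ⟨v, hv, Finset.mem_insert_self _ _⟩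
    · obtain ⟨u, hu, hadj⟩ := hdom v hv
      exact ⟨u, hu, Finset.mem_insert_of_mem (by rwa [SimpleGraph.mem_neighborFinset])⟩
  have hn1 : n ≤ ∑ u ∈ D, ((pathGraph n).degree u + 1) := by
    calc n = (Finset.univ : Finset (Fin n)).card := by simp
      _ ≤ (D.biUnion (fun u => insert u ((pathGraph n).neighborFinset u))).card :=
          Finset.card_le_card hcov
      _ ≤ ∑ u ∈ D, (insert u ((pathGraph n).neighborFinset u)).card :=
          Finset.card_biUnion_le
      _ ≤ ∑ u ∈ D, ((pathGraph n).degree u + 1) := by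
          apply Finset.sum_le_sum
          intro u _
          exact (Finset.card_insert_le _ _)
  have hzl2 : ({z, l} : Finset (Fin n)) ⊆ D := by
    intro x hx
    simp only [Finset.mem_insert, Finset.mem_singleton] at hx
    rcases hx with rfl | rfl <;> assumption
  have hsum : ∑ u ∈ D, ((pathGraph n).degree u + 1) ≤ 3 * D.card - 2 := by
    have hsplit : ∑ u ∈ D \ ({z, l} : Finset (Fin n)), ((pathGraph n).degree u + 1)
        + ∑ u ∈ ({z, l} : Finset (Fin n)), ((pathGraph n).degree u + 1)
        = ∑ u ∈ D, ((pathGraph n).degree u + 1) := Finset.sum_sdiff hzl2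
    have hpair : ∑ u ∈ ({z, l} : Finset (Fin n)), ((pathGraph n).degree u + 1) = 4 := by
      rw [Finset.sum_pair hzl]
      rw [hz, hl, deg_zero n (by omega), deg_last n (by omega)]
    have hrest : ∑ u ∈ D \ {z, l}, ((pathGraph n).degree u + 1) ≤ 3 * (D.card - 2) := by
      calc ∑ u ∈ D \ {z, l}, ((pathGraph n).degree u + 1)
          ≤ ∑ _u ∈ D \ {z, l}, 3 := Finset.sum_le_sum (fun u _ => by
            have := deg_le n u; omega)
        _ = 3 * (D \ {z, l}).card := by rw [Finset.sum_const]; ring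
        _ = 3 * (D.card - 2) := by
            rw [Finset.card_sdiff_of_subset hzl2, Finset.card_pair hzl]
    have hcard2 : 2 ≤ D.card := by
      calc 2 = ({z, l} : Finset (Fin n)).card := (Finset.card_pair hzl).symm
        _ ≤ D.card := Finset.card_le_card hzl2
    omega
  have hcard2 : 2 ≤ D.card := by
    calc 2 = ({z, l} : Finset (Fin n)).card := (Finset.card_pair hzl).symm
      _ ≤ D.card := Finset.card_le_card hzl2
  omega


end Aux

section Main
open SimpleGraph Finset

/-- The co-even domination number of the path on n vertices, n at least 4,
is 2 + the ceiling of (n-4)/3. -/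
theorem stmt_13 (n : ℕ) (hn : 4 ≤ n) :
    coevenDomNum (SimpleGraph.pathGraph n) = 2 + ((n - 4) + 2) / 3 := by
  have h42 : (n - 4) + 2 = n - 2 := by omega
  rw [h42]
  obtain ⟨D, hD, hcard⟩ := ub n hn
  have hmem : (2 + (n - 2) / 3) ∈
      {k | ∃ D : Finset (Fin n), IsCoevenDomSet (SimpleGraph.pathGraph n) D ∧ D.card = k} :=
    ⟨D, hD, hcard⟩
  unfold coevenDomNum
  apply le_antisymm
  · exact Nat.sInf_le hmem
  · apply le_csInf ⟨_, hmem⟩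
    rintro b ⟨E, hE, rfl⟩
    exact lb n hn E hE

end Main
end

section
/- Let n be an odd positive integer and m an even integer with m ≥ 2. Then d_coe(K_{n,m}, i) = 0 for every i with 0 < i < m, and d_coe(K_{n,m}, i) = C(n, i − m) (a binomial coefficient) for every i with m + 1 ≤ i ≤ n + m. -/
open scoped Classical

/-- The number of co-even dominating sets of the complete bipartite graph
K_{n,m} with cardinality i. -/
noncomputable def dcoeKB (n m i : ℕ) : ℕ :=
  (Finset.univ.filter fun D : Finset (Fin n ⊕ Fin m) =>
    IsCoevenDomSet (completeBipartiteGraph (Fin n) (Fin m)) D ∧ D.card = i).card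

lemma degKB_inr (n m : ℕ) (j : Fin m) :
    (completeBipartiteGraph (Fin n) (Fin m)).degree (Sum.inr j) = n := by
  rw [← SimpleGraph.card_neighborFinset_eq_degree]
  have : (completeBipartiteGraph (Fin n) (Fin m)).neighborFinset (Sum.inr j)
      = Finset.univ.map ⟨Sum.inl, Sum.inl_injective⟩ := by
    ext x; cases x <;> simp
  rw [this, Finset.card_map, Finset.card_univ, Fintype.card_fin]

lemma degKB_inl (n m : ℕ) (a : Fin n) :
    (completeBipartiteGraph (Fin n) (Fin m)).degree (Sum.inl a) = m := by
  rw [← SimpleGraph.card_neighborFinset_eq_degree]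
  have : (completeBipartiteGraph (Fin n) (Fin m)).neighborFinset (Sum.inl a)
      = Finset.univ.map ⟨Sum.inr, Sum.inr_injective⟩ := by
    ext x; cases x <;> simp
  rw [this, Finset.card_map, Finset.card_univ, Fintype.card_fin]

lemma charKB (n m : ℕ) (hn : Odd n) (hm : Even m) (hm1 : 1 ≤ m)
    (D : Finset (Fin n ⊕ Fin m)) :
    IsCoevenDomSet (completeBipartiteGraph (Fin n) (Fin m)) D ↔
      ∀ j : Fin m, Sum.inr j ∈ D := by
  constructor
  · rintro ⟨_, heven⟩ j
    by_contra hj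
    have := heven _ hj
    rw [degKB_inr] at this
    exact ((Nat.not_even_iff_odd.mpr hn)) this
  · intro hR
    constructor
    · intro v hv
      cases v with
      | inl a => exact ⟨Sum.inr ⟨0, hm1⟩, hR _, by simp⟩
      | inr b => exact absurd (hR b) hv
    · intro v hv
      cases v with
      | inl a => rw [degKB_inl]; exact hm
      | inr b => exact absurd (hR b) hv

lemma dcoeKB_eq (n m : ℕ) (hn : Odd n) (hm : Even m) (hm1 : 1 ≤ m) (i : ℕ) :
    dcoeKB n m i =
      (Finset.univ.filter fun D : Finset (Fin n ⊕ Fin m) =>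
        (∀ j : Fin m, Sum.inr j ∈ D) ∧ D.card = i).card := by
  unfold dcoeKB
  congr 1
  apply Finset.filter_congr
  intro D _
  rw [charKB n m hn hm hm1 D]


/-- Co-even dominating sets of K_{n,m} for n odd and m even. -/
theorem stmt_15 (n m : ℕ) (hn : Odd n) (hm : Even m) (hm2 : 2 ≤ m) :
    (∀ i : ℕ, 0 < i → i < m → dcoeKB n m i = 0) ∧
      (∀ i : ℕ, m + 1 ≤ i → i ≤ n + m → dcoeKB n m i = Nat.choose n (i - m)) := by
  have hm1 : 1 ≤ m := le_trans (by norm_num) hm2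
  constructor
  · intro i _ him
    rw [dcoeKB_eq n m hn hm hm1, Finset.card_eq_zero, Finset.filter_eq_empty_iff]
    rintro D - ⟨hR, hcard⟩
    have hsub : (Finset.univ.map ⟨Sum.inr, Sum.inr_injective⟩ : Finset (Fin n ⊕ Fin m)) ⊆ D := by
      intro x hx
      simp only [Finset.mem_map, Finset.mem_univ, true_and] at hx
      obtain ⟨j, rfl⟩ := hx
      exact hR j
    have := Finset.card_le_card hsub
    rw [Finset.card_map, Finset.card_univ, Fintype.card_fin, hcard] at this
    omega
  · intro i hi1 hi2
    have him : m ≤ i := le_trans (Nat.le_succ m) hi1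
    rw [dcoeKB_eq n m hn hm hm1]
    have hcardB : (Finset.powersetCard (i - m) (Finset.univ : Finset (Fin n))).card
        = n.choose (i - m) := by
      rw [Finset.card_powersetCard, Finset.card_univ, Fintype.card_fin]
    rw [← hcardB]
    refine Finset.card_bij'
      (fun D _ => D.preimage Sum.inl (Sum.inl_injective.injOn))
      (fun S _ => S.map ⟨Sum.inl, Sum.inl_injective⟩ ∪
        Finset.univ.map ⟨Sum.inr, Sum.inr_injective⟩) ?hi ?hj ?li ?ri
    case hi => -- membership forward
      intro D hD
      simp only [Finset.mem_filter, Finset.mem_univ, true_and] at hD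
      obtain ⟨hR, hcard⟩ := hD
      rw [Finset.mem_powersetCard]
      refine ⟨Finset.subset_univ _, ?_⟩
      have hDeq : D = (D.preimage Sum.inl (Sum.inl_injective.injOn)).map
          ⟨Sum.inl, Sum.inl_injective⟩ ∪ Finset.univ.map ⟨Sum.inr, Sum.inr_injective⟩ := by
        ext x
        cases x with
        | inl a => simp
        | inr b => simp [hR b]
      have hdisj : Disjoint
          ((D.preimage Sum.inl (Sum.inl_injective.injOn)).map ⟨Sum.inl, Sum.inl_injective⟩)
          ((Finset.univ : Finset (Fin m)).map ⟨Sum.inr, Sum.inr_injective⟩) := by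
        rw [Finset.disjoint_left]
        rintro x hx hx'
        simp only [Finset.mem_map] at hx hx'
        obtain ⟨a, _, rfl⟩ := hx
        obtain ⟨b, _, h⟩ := hx'
        simp at h
      have := congrArg Finset.card hDeq
      rw [hcard, Finset.card_union_of_disjoint hdisj, Finset.card_map, Finset.card_map,
        Finset.card_univ, Fintype.card_fin] at this
      show (D.preimage Sum.inl (Sum.inl_injective.injOn)).card = i - m
      omega
    case hj => -- membership backward
      intro S hS
      rw [Finset.mem_powersetCard] at hS
      simp only [Finset.mem_filter, Finset.mem_univ, true_and]
      constructor
      · intro j; simp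
      · have hdisj : Disjoint (S.map ⟨Sum.inl, Sum.inl_injective⟩)
            ((Finset.univ : Finset (Fin m)).map ⟨Sum.inr, Sum.inr_injective⟩) := by
          rw [Finset.disjoint_left]
          rintro x hx hx'
          simp only [Finset.mem_map] at hx hx'
          obtain ⟨a, _, rfl⟩ := hx
          obtain ⟨b, _, h⟩ := hx'
          simp at h
        rw [Finset.card_union_of_disjoint hdisj, Finset.card_map, Finset.card_map,
          Finset.card_univ, Fintype.card_fin, hS.2]
        omega
    case li => -- left inverse
      intro D hD
      simp only [Finset.mem_filter, Finset.mem_univ, true_and] at hD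
      ext x
      cases x with
      | inl a => simp
      | inr b => simp [hD.1 b]
    case ri => -- right inverse
      intro S hS
      ext a
      simp
end

section
/- Let n and m both be even integers with n, m ≥ 2. Then d_coe(K_{n,m}, 1) = 0, and for every i with 2 ≤ i ≤ n + m such that i ≠ n and i ≠ m, d_coe(K_{n,m}, i) = Σ_{t+s=i, 1≤t≤n, 1≤s≤m} C(n, t)·C(m, s). -/
open scoped Classical

section Helpers

variable {n m : ℕ}

lemma degree_even (hn : Even n) (hm : Even m) (v : Fin n ⊕ Fin m) :
    Even ((completeBipartiteGraph (Fin n) (Fin m)).degree v) := by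
  cases v with
  | inl a =>
      have : (completeBipartiteGraph (Fin n) (Fin m)).neighborFinset (Sum.inl a)
          = Finset.univ.map ⟨Sum.inr, Sum.inr_injective⟩ := by
        ext w
        cases w <;> simp [SimpleGraph.mem_neighborFinset]
      rw [SimpleGraph.degree, this]
      simpa using hm
  | inr b =>
      have : (completeBipartiteGraph (Fin n) (Fin m)).neighborFinset (Sum.inr b)
          = Finset.univ.map ⟨Sum.inl, Sum.inl_injective⟩ := by
        ext w
        cases w <;> simp [SimpleGraph.mem_neighborFinset]
      rw [SimpleGraph.degree, this]
      simpa using hn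

lemma dom_char (D : Finset (Fin n ⊕ Fin m)) :
    IsDomSet (completeBipartiteGraph (Fin n) (Fin m)) D ↔
      (D.toLeft = Finset.univ ∨ D.toRight.Nonempty) ∧
      (D.toRight = Finset.univ ∨ D.toLeft.Nonempty) := by
  constructor
  · intro h
    constructor
    · by_contra hc
      push_neg at hc
      obtain ⟨h1, h2⟩ := hc
      rw [Ne, Finset.eq_univ_iff_forall] at h1
      push_neg at h1
      obtain ⟨a, ha⟩ := h1
      obtain ⟨u, hu, hadj⟩ := h (Sum.inl a) (by simpa using ha)
      cases u with
      | inl a' => simp at hadj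
      | inr b => exact absurd (by simpa using hu : b ∈ D.toRight) (by rw [h2]; simp)
    · by_contra hc
      push_neg at hc
      obtain ⟨h1, h2⟩ := hc
      rw [Ne, Finset.eq_univ_iff_forall] at h1
      push_neg at h1
      obtain ⟨b, hb⟩ := h1
      obtain ⟨u, hu, hadj⟩ := h (Sum.inr b) (by simpa using hb)
      cases u with
      | inr b' => simp at hadj
      | inl a => exact absurd (by simpa using hu : a ∈ D.toLeft) (by rw [h2]; simp)
  · rintro ⟨h1, h2⟩ v hv
    cases v with
    | inl a =>
        rcases h1 with h1 | ⟨b, hb⟩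
        · exact absurd (by simpa using (h1 ▸ Finset.mem_univ a : a ∈ D.toLeft)) hv
        · exact ⟨Sum.inr b, by simpa using hb, by simp⟩
    | inr b =>
        rcases h2 with h2 | ⟨a, ha⟩
        · exact absurd (by simpa using (h2 ▸ Finset.mem_univ b : b ∈ D.toRight)) hv
        · exact ⟨Sum.inl a, by simpa using ha, by simp⟩

lemma count_eq (i : ℕ) :
    (Finset.univ.filter fun D : Finset (Fin n ⊕ Fin m) =>
      D.toLeft.Nonempty ∧ D.toRight.Nonempty ∧ D.card = i).card
    = ∑ p ∈ (Finset.HasAntidiagonal.antidiagonal i).filter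
        (fun p => 1 ≤ p.1 ∧ p.1 ≤ n ∧ 1 ≤ p.2 ∧ p.2 ≤ m),
      Nat.choose n p.1 * Nat.choose m p.2 := by
  have hbij : (Finset.univ.filter fun D : Finset (Fin n ⊕ Fin m) =>
      D.toLeft.Nonempty ∧ D.toRight.Nonempty ∧ D.card = i).card
      = (Finset.univ.filter fun q : Finset (Fin n) × Finset (Fin m) =>
          q.1.Nonempty ∧ q.2.Nonempty ∧ q.1.card + q.2.card = i).card := by
    refine Finset.card_bij' (fun D _ => (D.toLeft, D.toRight))
      (fun q _ => q.1.disjSum q.2) ?_ ?_ ?_ ?_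
    case _ =>
      intro D hD
      simp only [Finset.mem_filter, Finset.mem_univ, true_and] at hD ⊢
      exact ⟨hD.1, hD.2.1, by rw [Finset.card_toLeft_add_card_toRight]; exact hD.2.2⟩
    case _ =>
      intro q hq
      simp only [Finset.mem_filter, Finset.mem_univ, true_and] at hq ⊢
      simpa [Finset.card_disjSum] using hq
    case _ =>
      intro D _
      exact Finset.toLeft_disjSum_toRight
    case _ =>
      intro q _
      simp
  rw [hbij]
  rw [Finset.card_eq_sum_card_fiberwise
    (f := fun q : Finset (Fin n) × Finset (Fin m) => (q.1.card, q.2.card))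
    (t := (Finset.HasAntidiagonal.antidiagonal i).filter (fun p => 1 ≤ p.1 ∧ p.1 ≤ n ∧ 1 ≤ p.2 ∧ p.2 ≤ m))]
  · apply Finset.sum_congr rfl
    intro p hp
    simp only [Finset.mem_filter, Finset.mem_antidiagonal] at hp
    obtain ⟨hpi, hp1, hpn, hp2, hpm⟩ := hp
    have : ((Finset.univ.filter fun q : Finset (Fin n) × Finset (Fin m) =>
        q.1.Nonempty ∧ q.2.Nonempty ∧ q.1.card + q.2.card = i).filter
        (fun q => (q.1.card, q.2.card) = p))
        = Finset.powersetCard p.1 Finset.univ ×ˢ Finset.powersetCard p.2 Finset.univ := by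
      ext q
      simp only [Finset.mem_filter, Finset.mem_univ, true_and, Finset.mem_product,
        Finset.mem_powersetCard, Prod.ext_iff, Finset.subset_univ, true_and]
      constructor
      · rintro ⟨-, h1, h2⟩
        exact ⟨h1, h2⟩
      · rintro ⟨h1, h2⟩
        refine ⟨⟨?_, ?_, by rw [h1, h2]; exact Finset.HasAntidiagonal.mem_antidiagonal.mp hpi⟩, h1, h2⟩
        · rw [← Finset.card_pos, h1]; exact hp1
        · rw [← Finset.card_pos, h2]; exact hp2
    rw [this, Finset.card_product, Finset.card_powersetCard, Finset.card_powersetCard]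
    simp
  · intro q hq
    simp only [Finset.mem_coe, Finset.mem_filter, Finset.mem_univ, true_and,
      Finset.HasAntidiagonal.mem_antidiagonal] at hq ⊢
    refine ⟨by simp [Finset.mem_antidiagonal, hq.2.2], hq.1.card_pos, ?_, hq.2.1.card_pos, ?_⟩
    · simpa using Finset.card_le_univ q.1
    · simpa using Finset.card_le_univ q.2


end Helpers

lemma coe_iff {V : Type*} [Fintype V] (G : SimpleGraph V) (D : Finset V) :
    IsCoevenDomSet G D ↔ IsDomSet G D ∧ ∀ v ∉ D, Even (G.degree v) := Iff.rfl

/-- Co-even dominating sets of K_{n,m} for n and m both even. -/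
theorem stmt_16 (n m : ℕ) (hn : Even n) (hm : Even m) (hn2 : 2 ≤ n) (hm2 : 2 ≤ m) :
    dcoeKB n m 1 = 0 ∧
      (∀ i : ℕ, 2 ≤ i → i ≤ n + m → i ≠ n → i ≠ m →
        dcoeKB n m i =
          ∑ p ∈ (Finset.HasAntidiagonal.antidiagonal i).filter
              (fun p => 1 ≤ p.1 ∧ p.1 ≤ n ∧ 1 ≤ p.2 ∧ p.2 ≤ m),
            Nat.choose n p.1 * Nat.choose m p.2) := by
  unfold dcoeKB
  simp only [coe_iff]
  constructor
  · rw [Finset.card_eq_zero, Finset.filter_eq_empty_iff]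
    rintro D - ⟨⟨hdom, -⟩, hcard⟩
    rw [dom_char] at hdom
    have hL : D.toLeft.card ≤ 1 := hcard ▸ Finset.card_toLeft_le
    have hR : D.toRight.card ≤ 1 := hcard ▸ Finset.card_toRight_le
    rcases hdom.1 with h1 | h1
    · rw [h1] at hL; simp at hL; omega
    rcases hdom.2 with h2 | h2
    · rw [h2] at hR; simp at hR; omega
    have := Finset.card_toLeft_add_card_toRight (u := D)
    have := h1.card_pos
    have := h2.card_pos
    omega
  · intro i hi2 hisum hin him
    rw [Finset.filter_congr (q := fun D : Finset (Fin n ⊕ Fin m) =>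
        D.toLeft.Nonempty ∧ D.toRight.Nonempty ∧ D.card = i)]
    · exact count_eq i
    · intro D _
      constructor
      · rintro ⟨⟨hdom, -⟩, hcard⟩
        rw [dom_char] at hdom
        have hsum := Finset.card_toLeft_add_card_toRight (u := D)
        by_cases hR : D.toRight.Nonempty
        · by_cases hL : D.toLeft.Nonempty
          · exact ⟨hL, hR, hcard⟩
          · exfalso
            rw [Finset.not_nonempty_iff_eq_empty] at hL
            have h2 := hdom.2.resolve_right (by rw [hL]; simp)
            have hm' : D.toRight.card = m := by rw [h2]; simp
            have h0 : D.toLeft.card = 0 := by rw [hL]; simp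
            omega
        · exfalso
          have h1 := hdom.1.resolve_right hR
          rw [Finset.not_nonempty_iff_eq_empty] at hR
          have hn' : D.toLeft.card = n := by rw [h1]; simp
          have h0 : D.toRight.card = 0 := by rw [hR]; simp
          omega
      · rintro ⟨h1, h2, hcard⟩
        refine ⟨⟨?_, fun v _ => degree_even hn hm v⟩, hcard⟩
        rw [dom_char]
        exact ⟨Or.inr h2, Or.inr h1⟩
end
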